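/- arXiv:2209.14543 — 5 statements merged into one kernel-verified Lean document; each statement's English description precedes it below -/
import Mathlib

section
/- Let ℓ ≥ 1 and let S = {i₁ < ⋯ < i_m} ⊆ {1,…,ℓ} be nonempty, with the convention i₀ = 0. Then for every 1 ≤ j ≤ m, the number of integers n with 1 ≤ n ≤ i_j − 1 such that |S ∩ {n, n+1, …, i_j − 1}| is even and nonzero equals T₁(j) = Σ_{k=1}^{⌊(j+1)/2⌋−1} (i_{j−2k} − i_{j−2k−1}). -/
/-!
Write `S = {i₁, …, i_m}`. On the block `i_a < n ≤ i_{a+1}` (with `a < j`) the set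
`S ∩ [n, i_j - 1]` is `{i_{a+1}, …, i_{j-1}}`, of size `j - 1 - a`. So `n` is counted exactly when
`j - 1 - a = 2k` with `k ≥ 1`, and the whole block `(i_{j-2k-1}, i_{j-2k}]` is counted.
-/

open Finset

theorem Finset.natCast_card_filter_Ioc_eq_sum_range {f : ℕ → ℕ} {p q : ℕ → Prop}
    [DecidablePred p] [DecidablePred q] {j : ℕ} (hf : MonotoneOn f (Set.Iic j))
    (hpq : ∀ a < j, ∀ n ∈ Ioc (f a) (f (a + 1)), p n ↔ q a) :
    (#{n ∈ Ioc (f 0) (f j) | p n} : ℤ)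
      = ∑ a ∈ range j, if q a then (f (a + 1) : ℤ) - f a else 0 := by
  induction j with
  | zero => simp
  | succ j ih =>
    have hmem : ∀ {a}, a ≤ j + 1 → a ∈ Set.Iic (j + 1) := id
    have hstep : f j ≤ f (j + 1) := hf (hmem j.le_succ) (hmem le_rfl) j.le_succ
    have hblock : (#{n ∈ Ioc (f j) (f (j + 1)) | p n} : ℤ)
        = if q j then (f (j + 1) : ℤ) - f j else 0 := by
      split_ifs with hq
      · rw [filter_true_of_mem fun n hn => (hpq j j.lt_succ_self n hn).2 hq, Nat.card_Ioc,
          Nat.cast_sub hstep]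
      · rw [filter_false_of_mem fun n hn => mt (hpq j j.lt_succ_self n hn).1 hq, card_empty,
          Nat.cast_zero]
    rw [← Ioc_union_Ioc_eq_Ioc (hf (hmem (Nat.zero_le _)) (hmem j.le_succ) (Nat.zero_le _)) hstep,
      filter_union, card_union_of_disjoint (disjoint_filter_filter (Ioc_disjoint_Ioc_of_le le_rfl)),
      Nat.cast_add, ih (hf.mono (Set.Iic_subset_Iic.2 j.le_succ)) (fun a ha => hpq a (by omega)),
      hblock, sum_range_succ]

theorem card_image_inter_Icc_of_mem_Ioc {i : ℕ → ℕ} {m a j n : ℕ}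
    (hi : StrictMonoOn i (Set.Iic m)) (haj : a < j) (hjm : j ≤ m)
    (hn : n ∈ Ioc (i a) (i (a + 1))) :
    #((Icc 1 m).image i ∩ Icc n (i j - 1)) = j - 1 - a := by
  rw [mem_Ioc] at hn
  have hset : (Icc 1 m).image i ∩ Icc n (i j - 1) = (Ico (a + 1) j).image i := by
    ext x
    simp only [mem_inter, mem_image, mem_Icc, mem_Ico]
    constructor
    · rintro ⟨⟨k, ⟨-, hkm⟩, rfl⟩, hnk, hkj⟩
      have hak : a < k := (hi.lt_iff_lt (show a ≤ m by omega) hkm).1 (by omega)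
      have hkj : k < j := (hi.lt_iff_lt hkm hjm).1 (by omega)
      exact ⟨k, ⟨hak, hkj⟩, rfl⟩
    · rintro ⟨k, ⟨hak, hkj⟩, rfl⟩
      have hak : i (a + 1) ≤ i k :=
        hi.monotoneOn (show a + 1 ≤ m by omega) (show k ≤ m by omega) hak
      have hkj : i k < i j := hi (show k ≤ m by omega) hjm hkj
      exact ⟨⟨k, ⟨by omega, by omega⟩, rfl⟩, by omega, by omega⟩
  rw [hset, card_image_of_injOn (hi.injOn.mono fun k hk => ?_), Nat.card_Ico]
  · omega
  · simp only [coe_Ico, Set.mem_Ico, Set.mem_Iic] at hk ⊢; omega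

theorem sum_range_ite_even_sub_eq_sum_Icc {M : Type*} [AddCommMonoid M] (g : ℕ → M) (j : ℕ) :
    (∑ a ∈ range j, if Even (j - 1 - a) ∧ j - 1 - a ≠ 0 then g a else 0)
      = ∑ k ∈ Icc 1 ((j + 1) / 2 - 1), g (j - 2 * k - 1) := by
  rw [← sum_filter, ← sum_image (g := fun k => j - 2 * k - 1) (f := g)]
  · congr 1
    ext a
    simp only [mem_filter, mem_range, mem_image, mem_Icc]
    constructor
    · rintro ⟨ha, ⟨t, ht⟩, hne⟩
      exact ⟨t, by omega, by omega⟩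
    · rintro ⟨k, hk, rfl⟩
      exact ⟨by omega, ⟨k, by omega⟩, by omega⟩
  · intro x hx y hy hxy
    simp only [coe_Icc, Set.mem_Icc] at hx hy hxy
    omega

theorem stmt2_general (m : ℕ)
    (i : ℕ → ℕ) (h0 : i 0 = 0)
    (hmono : ∀ k ≤ m, i k < i (k + 1))
    (j : ℕ) (hjm : j ≤ m) :
    (((Finset.Icc 1 (i j - 1)).filter
        (fun n => Even ((((Finset.Icc 1 m).image i) ∩ Finset.Icc n (i j - 1)).card) ∧
          (((Finset.Icc 1 m).image i) ∩ Finset.Icc n (i j - 1)).card ≠ 0)).card : ℤ)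
      = ∑ k ∈ Finset.Icc 1 ((j + 1) / 2 - 1),
          ((i (j - 2 * k) : ℤ) - (i (j - 2 * k - 1) : ℤ)) := by
  have hi : StrictMonoOn i (Set.Iic m) := strictMonoOn_Iic_of_lt_succ fun k hk => hmono k hk.le
  set c : ℕ → ℕ := fun n => #((Icc 1 m).image i ∩ Icc n (i j - 1))
  have hIoc : {n ∈ Icc 1 (i j - 1) | Even (c n) ∧ c n ≠ 0}
      = {n ∈ Ioc (i 0) (i j) | Even (c n) ∧ c n ≠ 0} := by
    ext n
    simp only [mem_filter, mem_Icc, mem_Ioc, h0]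
    refine ⟨fun ⟨hn, hc⟩ => ⟨by omega, hc⟩, fun ⟨hn, hc⟩ => ⟨⟨hn.1, ?_⟩, hc⟩⟩
    by_contra hlt
    exact hc.2 (by simp [c, Icc_eq_empty_of_lt (show i j - 1 < n by omega)])
  rw [hIoc, natCast_card_filter_Ioc_eq_sum_range (q := fun a => Even (j - 1 - a) ∧ j - 1 - a ≠ 0)
      (hi.monotoneOn.mono (Set.Iic_subset_Iic.2 hjm))
      fun a ha n hn => by rw [show c n = j - 1 - a from card_image_inter_Icc_of_mem_Ioc hi ha hjm hn],
    sum_range_ite_even_sub_eq_sum_Icc (fun a => (i (a + 1) : ℤ) - i a)]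
  refine sum_congr rfl fun k hk => ?_
  rw [mem_Icc] at hk
  rw [show j - 2 * k - 1 + 1 = j - 2 * k by omega]

/-- counting relevant compact roots `γ_n + ⋯ + γ_{i_j - 1}` in type `A_ℓ`. -/
theorem stmt2 (ℓ m : ℕ) (hℓ : 1 ≤ ℓ) (hm : 1 ≤ m)
    (i : ℕ → ℕ) (h0 : i 0 = 0) (htop : i (m + 1) = ℓ + 1)
    (hmono : ∀ k ≤ m, i k < i (k + 1))
    (j : ℕ) (hj : 1 ≤ j) (hjm : j ≤ m) :
    (((Finset.Icc 1 (i j - 1)).filter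
        (fun n => Even ((((Finset.Icc 1 m).image i) ∩ Finset.Icc n (i j - 1)).card) ∧
          (((Finset.Icc 1 m).image i) ∩ Finset.Icc n (i j - 1)).card ≠ 0)).card : ℤ)
      = ∑ k ∈ Finset.Icc 1 ((j + 1) / 2 - 1),
          ((i (j - 2 * k) : ℤ) - (i (j - 2 * k - 1) : ℤ)) :=
  stmt2_general m i h0 hmono j hjm
end

section
/- Let ℓ ≥ 2 and let S = {i₁ < ⋯ < i_m} ⊆ {1,…,ℓ} with i_m = ℓ (convention i₀ = 0). In the root system of type B_ℓ with compact positive roots defined by the parity rule (α = Σ n_i γ_i is compact iff Σ_{i∈S} n_i is even) and relevant compact roots those with Σ_{i∈S} n_i > 0, let δᶜ ∈ ℤ^ℓ be the coefficient vector of the sum of all relevant compact positive roots. Then −2δᶜ_{ℓ−1} + 2δᶜ_ℓ = 2(ℓ − i_{m−1} − 1). -/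
/-- `n`-th coefficient of the sum of all relevant compact positive roots of type `B_ℓ`.
Positive roots are `Σ_{i=a}^{b} γ_i` (`1 ≤ a ≤ b ≤ ℓ`) and
`Σ_{i=a}^{b} γ_i + Σ_{i=b+1}^{ℓ} 2γ_i` (`1 ≤ a ≤ b ≤ ℓ−1`); a root `Σ nᵢγᵢ` is
compact iff `Σ_{i∈S} nᵢ` is even, and relevant iff moreover `Σ_{i∈S} nᵢ > 0`. -/
def deltaB (ℓ : ℕ) (S : Finset ℕ) (n : ℕ) : ℤ :=
  (∑ p ∈ (Finset.Icc 1 ℓ ×ˢ Finset.Icc 1 ℓ).filter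
      (fun p => p.1 ≤ p.2 ∧
        Even ((S ∩ Finset.Icc p.1 p.2).card) ∧
        0 < (S ∩ Finset.Icc p.1 p.2).card),
      (if p.1 ≤ n ∧ n ≤ p.2 then (1 : ℤ) else 0))
  + ∑ p ∈ (Finset.Icc 1 ℓ ×ˢ Finset.Icc 1 (ℓ - 1)).filter
      (fun p => p.1 ≤ p.2 ∧
        Even ((S ∩ Finset.Icc p.1 p.2).card + 2 * (S ∩ Finset.Icc (p.2 + 1) ℓ).card) ∧
        0 < (S ∩ Finset.Icc p.1 p.2).card + 2 * (S ∩ Finset.Icc (p.2 + 1) ℓ).card),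
      ((if p.1 ≤ n ∧ n ≤ p.2 then (1 : ℤ) else 0)
        + (if p.2 + 1 ≤ n ∧ n ≤ ℓ then (2 : ℤ) else 0))

/-!
Write `τ c = -2 c_{ℓ-1} + 2 c_ℓ`. The only positive roots with `τ ≠ 0` are `γ_a + ⋯ + γ_{ℓ-1}`,
with `τ = -2`, and `γ_a + ⋯ + γ_{ℓ-1} + 2γ_ℓ`, with `τ = 2` (`γ_ℓ` itself, with `τ = 2`, is
noncompact because `ℓ ∈ S`). Both roots of a given `a` are compact exactly when
`#(S ∩ [a, ℓ-1])` is even, but only the second is relevant when this number is `0`. So `τ δᶜ` is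
twice the number of `a ∈ [1, ℓ-1]` with `S ∩ [a, ℓ-1] = ∅`, i.e. of `a ∈ (i_{m-1}, ℓ-1]`.
-/

open Finset

/-- A pair `(a, b)` stands for the root `γ_a + ⋯ + γ_b`. -/
def relevantRoots₁ (ℓ : ℕ) (S : Finset ℕ) : Finset (ℕ × ℕ) :=
  (Icc 1 ℓ ×ˢ Icc 1 ℓ).filter
    (fun p => p.1 ≤ p.2 ∧ Even #(S ∩ Icc p.1 p.2) ∧ 0 < #(S ∩ Icc p.1 p.2))

/-- A pair `(a, b)` stands for the root `γ_a + ⋯ + γ_b + 2γ_{b+1} + ⋯ + 2γ_ℓ`. -/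
def relevantRoots₂ (ℓ : ℕ) (S : Finset ℕ) : Finset (ℕ × ℕ) :=
  (Icc 1 ℓ ×ˢ Icc 1 (ℓ - 1)).filter
    (fun p => p.1 ≤ p.2 ∧
      Even (#(S ∩ Icc p.1 p.2) + 2 * #(S ∩ Icc (p.2 + 1) ℓ)) ∧
      0 < #(S ∩ Icc p.1 p.2) + 2 * #(S ∩ Icc (p.2 + 1) ℓ))

def coeff₁ (p : ℕ × ℕ) (n : ℕ) : ℤ := if p.1 ≤ n ∧ n ≤ p.2 then 1 else 0

def coeff₂ (ℓ : ℕ) (p : ℕ × ℕ) (n : ℕ) : ℤ :=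
  coeff₁ p n + if p.2 + 1 ≤ n ∧ n ≤ ℓ then 2 else 0

theorem deltaB_eq_sum (ℓ : ℕ) (S : Finset ℕ) (n : ℕ) :
    deltaB ℓ S n = ∑ p ∈ relevantRoots₁ ℓ S, coeff₁ p n + ∑ p ∈ relevantRoots₂ ℓ S, coeff₂ ℓ p n :=
  rfl

/-- The last row `(0, …, 0, -2, 2)` of the Cartan matrix of `B_ℓ`, applied to `c`. -/
def lastCartanRow (ℓ : ℕ) (c : ℕ → ℤ) : ℤ := -2 * c (ℓ - 1) + 2 * c ℓ

theorem lastCartanRow_coeff₁ {ℓ a b : ℕ} (ha : 1 ≤ a) (hab : a ≤ b) (hb : b ≤ ℓ) (haℓ : a ≠ ℓ) :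
    lastCartanRow ℓ (coeff₁ (a, b)) = if b = ℓ - 1 then -2 else 0 := by
  unfold lastCartanRow coeff₁
  split_ifs <;> omega

theorem lastCartanRow_coeff₂ {ℓ a b : ℕ} (ha : 1 ≤ a) (hab : a ≤ b) (hb : b ≤ ℓ - 1) :
    lastCartanRow ℓ (coeff₂ ℓ (a, b)) = if b = ℓ - 1 then 2 else 0 := by
  unfold lastCartanRow coeff₂ coeff₁
  split_ifs <;> omega

theorem lastCartanRow_sum {ι : Type*} (ℓ : ℕ) (s : Finset ι) (c : ι → ℕ → ℤ) :
    lastCartanRow ℓ (fun n => ∑ x ∈ s, c x n) = ∑ x ∈ s, lastCartanRow ℓ (c x) := by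
  simp only [lastCartanRow, mul_sum, sum_add_distrib]

theorem card_inter_Icc_self {S : Finset ℕ} {ℓ : ℕ} (hℓS : ℓ ∈ S) : #(S ∩ Icc ℓ ℓ) = 1 := by
  rw [Icc_self, inter_singleton_of_mem hℓS, card_singleton]

theorem card_relevantRoots₁_filter_snd (ℓ : ℕ) (S : Finset ℕ) :
    #{p ∈ relevantRoots₁ ℓ S | p.2 = ℓ - 1} =
      #{a ∈ Icc 1 (ℓ - 1) | Even #(S ∩ Icc a (ℓ - 1)) ∧ 0 < #(S ∩ Icc a (ℓ - 1))} := by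
  refine card_nbij' Prod.fst (fun a => (a, ℓ - 1)) ?_ ?_ ?_ ?_ <;>
    · simp only [relevantRoots₁, mem_filter, mem_product, mem_Icc, Set.MapsTo, Set.LeftInvOn,
        mem_coe, Prod.forall, Prod.mk.injEq]
      grind

theorem card_relevantRoots₂_filter_snd {ℓ : ℕ} {S : Finset ℕ} (hℓS : ℓ ∈ S) :
    #{p ∈ relevantRoots₂ ℓ S | p.2 = ℓ - 1} = #{a ∈ Icc 1 (ℓ - 1) | Even #(S ∩ Icc a (ℓ - 1))} := by
  have hlast : ∀ a ∈ Icc 1 (ℓ - 1), #(S ∩ Icc (ℓ - 1 + 1) ℓ) = 1 := fun a ha => by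
    rw [mem_Icc] at ha
    rw [Nat.sub_add_cancel (by omega), card_inter_Icc_self hℓS]
  refine card_nbij' Prod.fst (fun a => (a, ℓ - 1)) ?_ ?_ ?_ ?_ <;>
    · simp only [relevantRoots₂, mem_filter, mem_product, mem_Icc, Set.MapsTo, Set.LeftInvOn,
        mem_coe, Prod.forall, Prod.mk.injEq] at hlast ⊢
      grind

theorem card_filter_even_eq_add {α : Type*} (s : Finset α) (f : α → ℕ) :
    #{a ∈ s | Even (f a)} = #{a ∈ s | Even (f a) ∧ 0 < f a} + #{a ∈ s | f a = 0} := by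
  rw [← card_filter_add_card_filter_not (s := {a ∈ s | Even (f a)}) (fun a => 0 < f a),
    filter_filter, filter_filter]
  congr 2
  refine filter_congr fun a _ => ?_
  rw [not_lt, nonpos_iff_eq_zero]
  exact ⟨And.right, fun h => ⟨h ▸ Even.zero, h⟩⟩

theorem sum_lastCartanRow_coeff₁ {ℓ : ℕ} {S : Finset ℕ} (hℓS : ℓ ∈ S) :
    ∑ p ∈ relevantRoots₁ ℓ S, lastCartanRow ℓ (coeff₁ p) =
      -2 * #{a ∈ Icc 1 (ℓ - 1) | Even #(S ∩ Icc a (ℓ - 1)) ∧ 0 < #(S ∩ Icc a (ℓ - 1))} := by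
  calc _ = ∑ p ∈ relevantRoots₁ ℓ S, if p.2 = ℓ - 1 then (-2 : ℤ) else 0 :=
        sum_congr rfl fun ⟨a, b⟩ hp => by
          simp only [relevantRoots₁, mem_filter, mem_product, mem_Icc] at hp
          refine lastCartanRow_coeff₁ hp.1.1.1 hp.2.1 hp.1.2.2 fun haℓ => ?_
          -- the simple root `γ_ℓ` is noncompact since `ℓ ∈ S`
          obtain rfl : b = ℓ := by omega
          subst haℓ
          exact Nat.not_even_one (card_inter_Icc_self hℓS ▸ hp.2.2.1)
    _ = _ := by rw [← sum_filter, sum_const, nsmul_eq_mul, mul_comm, card_relevantRoots₁_filter_snd]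

theorem sum_lastCartanRow_coeff₂ {ℓ : ℕ} {S : Finset ℕ} (hℓS : ℓ ∈ S) :
    ∑ p ∈ relevantRoots₂ ℓ S, lastCartanRow ℓ (coeff₂ ℓ p) =
      2 * #{a ∈ Icc 1 (ℓ - 1) | Even #(S ∩ Icc a (ℓ - 1))} := by
  calc _ = ∑ p ∈ relevantRoots₂ ℓ S, if p.2 = ℓ - 1 then (2 : ℤ) else 0 :=
        sum_congr rfl fun ⟨a, b⟩ hp => by
          simp only [relevantRoots₂, mem_filter, mem_product, mem_Icc] at hp
          exact lastCartanRow_coeff₂ hp.1.1.1 hp.2.1 hp.1.2.2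
    _ = _ := by
      rw [← sum_filter, sum_const, nsmul_eq_mul, mul_comm, card_relevantRoots₂_filter_snd hℓS]

theorem lastCartanRow_deltaB {ℓ : ℕ} {S : Finset ℕ} (hℓS : ℓ ∈ S) :
    lastCartanRow ℓ (deltaB ℓ S) = 2 * #{a ∈ Icc 1 (ℓ - 1) | #(S ∩ Icc a (ℓ - 1)) = 0} := by
  have hsplit := card_filter_even_eq_add (Icc 1 (ℓ - 1)) fun a => #(S ∩ Icc a (ℓ - 1))
  calc lastCartanRow ℓ (deltaB ℓ S)
      = ∑ p ∈ relevantRoots₁ ℓ S, lastCartanRow ℓ (coeff₁ p)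
          + ∑ p ∈ relevantRoots₂ ℓ S, lastCartanRow ℓ (coeff₂ ℓ p) := by
        simp only [← lastCartanRow_sum]
        simp only [lastCartanRow, deltaB_eq_sum]
        ring
    _ = _ := by
      rw [sum_lastCartanRow_coeff₁ hℓS, sum_lastCartanRow_coeff₂ hℓS, hsplit]
      push_cast
      ring

theorem card_filter_card_inter_Icc_eq_zero {S : Finset ℕ} {ℓ s : ℕ} (hsℓ : s < ℓ)
    (hgap : ∀ x ∈ S, x ≤ s ∨ ℓ ≤ x) (hs : s = 0 ∨ s ∈ S) :
    #{a ∈ Icc 1 (ℓ - 1) | #(S ∩ Icc a (ℓ - 1)) = 0} = ℓ - 1 - s := by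
  suffices h : {a ∈ Icc 1 (ℓ - 1) | #(S ∩ Icc a (ℓ - 1)) = 0} = Ioc s (ℓ - 1) by
    rw [h, Nat.card_Ioc]
  ext a
  simp only [mem_filter, mem_Icc, mem_Ioc, card_eq_zero, eq_empty_iff_forall_notMem, mem_inter]
  constructor
  · rintro ⟨⟨ha, haℓ⟩, hempty⟩
    refine ⟨?_, haℓ⟩
    by_contra! has
    rcases hs with rfl | hsS
    · omega
    · exact hempty s ⟨hsS, has, by omega⟩
  · rintro ⟨hsa, haℓ⟩
    refine ⟨⟨by omega, haℓ⟩, fun x ⟨hxS, hxa, hxℓ⟩ => ?_⟩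
    rcases hgap x hxS with h | h <;> omega

theorem le_or_le_of_mem_image_Icc {i : ℕ → ℕ} {m : ℕ} (hi : StrictMonoOn i (Set.Iic m)) :
    ∀ x ∈ (Icc 1 m).image i, x ≤ i (m - 1) ∨ i m ≤ x := by
  simp only [mem_image, mem_Icc]
  rintro _ ⟨k, ⟨-, hkm⟩, rfl⟩
  rcases hkm.eq_or_lt with rfl | hk
  · exact .inr le_rfl
  · exact .inl (hi.monotoneOn (Set.mem_Iic.2 hkm) (Set.mem_Iic.2 (by omega)) (by omega))

theorem stmt10_general (ℓ m : ℕ) (hm : 1 ≤ m)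
    (i : ℕ → ℕ) (h0 : i 0 = 0)
    (hmono : ∀ k ≤ m, i k < i (k + 1)) (him : i m = ℓ) :
    -2 * deltaB ℓ ((Finset.Icc 1 m).image i) (ℓ - 1)
      + 2 * deltaB ℓ ((Finset.Icc 1 m).image i) ℓ
      = 2 * ((ℓ : ℤ) - (i (m - 1) : ℤ) - 1) := by
  have hi : StrictMonoOn i (Set.Iic m) :=
    strictMonoOn_Iic_of_lt_succ fun k hk => by simpa using hmono k hk.le
  have hℓS : ℓ ∈ (Icc 1 m).image i := him ▸ mem_image_of_mem i (by simp [hm])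
  have hsℓ : i (m - 1) < ℓ := him ▸ hi (by simp) (by simp) (by omega)
  have hs : i (m - 1) = 0 ∨ i (m - 1) ∈ (Icc 1 m).image i := by
    rcases hm.eq_or_lt with rfl | hm
    · exact .inl h0
    · exact .inr (mem_image_of_mem i (mem_Icc.2 ⟨by omega, by omega⟩))
  have h := lastCartanRow_deltaB hℓS
  rw [card_filter_card_inter_Icc_eq_zero hsℓ (him ▸ le_or_le_of_mem_image_Icc hi) hs] at h
  rw [lastCartanRow] at h
  omega

/-- type `B_ℓ`, painted last node `i_m = ℓ`:
`−2δᶜ_{ℓ−1} + 2δᶜ_ℓ = 2(ℓ − i_{m−1} − 1)`. -/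
theorem stmt10 (ℓ m : ℕ) (hℓ : 2 ≤ ℓ) (hm : 1 ≤ m)
    (i : ℕ → ℕ) (h0 : i 0 = 0)
    (hmono : ∀ k ≤ m, i k < i (k + 1)) (him : i m = ℓ) :
    -2 * deltaB ℓ ((Finset.Icc 1 m).image i) (ℓ - 1)
      + 2 * deltaB ℓ ((Finset.Icc 1 m).image i) ℓ
      = 2 * ((ℓ : ℤ) - (i (m - 1) : ℤ) - 1) :=
  stmt10_general ℓ m hm i h0 hmono him
end

section
/- Let ℓ ≥ 3 and let S = {i₁ < ⋯ < i_m} ⊆ {1,…,ℓ} with i_m = ℓ (convention i₀ = 0). In the root system of type C_ℓ, positive roots are Σ_{i=a}^{b} γ_i (1 ≤ a ≤ b ≤ ℓ), Σ_{i=a}^{ℓ−1} 2γ_i + γ_ℓ (1 ≤ a ≤ ℓ−1), and Σ_{i=a}^{b} γ_i + Σ_{i=b+1}^{ℓ−1} 2γ_i + γ_ℓ (1 ≤ a ≤ b ≤ ℓ−2); a root α = Σ n_i γ_i is compact iff Σ_{i∈S} n_i is even, and relevant if moreover Σ_{i∈S} n_i > 0. Let δᶜ ∈ ℤ^ℓ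 be the coefficient vector of the sum of all relevant compact positive roots. Then −δᶜ_{ℓ−1} + 2δᶜ_ℓ = S₂(m) − T₁(m), where S₂(m) = Σ_{k=1}^{⌊m/2⌋}(i_{m−2k+1} − i_{m−2k}) and T₁(m) = Σ_{k=1}^{⌊(m+1)/2⌋−1}(i_{m−2k} − i_{m−2k−1}). -/
/-!
The functional `τ_ℓ(v) = -v (ℓ - 1) + 2 v ℓ` is linear, so `τ_ℓ(δᶜ)` is the sum of `τ_ℓ` over the
relevant compact positive roots. The roots whose coefficients at `γ_{ℓ-1}, γ_ℓ` are `2, 1`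
contribute nothing, and `γ_a + ⋯ + γ_b` contributes `[b = ℓ] - [b = ℓ - 1]` (the root `γ_ℓ` itself
is never compact and relevant). Hence `τ_ℓ(δᶜ) = N(ℓ) - N(ℓ - 1)`, where `N(c)` counts the `a ≤ c`
with `|S ∩ [a, c]|` even and positive. If `i_r ≤ c < i_{r+1}`, then `|S ∩ [a, c]| = r - j` on the
block `i_j < a ≤ i_{j+1}`, so `N(c) = Σ_{j < r, r - j even} (i_{j+1} - i_j)`; this is `S₂(m)` for
`c = ℓ` and `S₂(m - 1) = T₁(m)` for `c = ℓ - 1`.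
-/

/-- `n`-th coefficient of the sum of all relevant compact positive roots of type `C_ℓ`.
Positive roots are `Σ_{i=a}^{b} γ_i` (`1 ≤ a ≤ b ≤ ℓ`), `Σ_{i=a}^{ℓ−1} 2γ_i + γ_ℓ`
(`1 ≤ a ≤ ℓ−1`), and `Σ_{i=a}^{b} γ_i + Σ_{i=b+1}^{ℓ−1} 2γ_i + γ_ℓ` (`1 ≤ a ≤ b ≤ ℓ−2`);
a root `Σ nᵢγᵢ` is compact iff `Σ_{i∈S} nᵢ` is even, relevant iff moreover
`Σ_{i∈S} nᵢ > 0`. -/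
def deltaC (ℓ : ℕ) (S : Finset ℕ) (n : ℕ) : ℤ :=
  (∑ p ∈ (Finset.Icc 1 ℓ ×ˢ Finset.Icc 1 ℓ).filter
      (fun p => p.1 ≤ p.2 ∧
        Even ((S ∩ Finset.Icc p.1 p.2).card) ∧
        0 < (S ∩ Finset.Icc p.1 p.2).card),
      (if p.1 ≤ n ∧ n ≤ p.2 then (1 : ℤ) else 0))
  + (∑ a ∈ (Finset.Icc 1 (ℓ - 1)).filter
      (fun a =>
        Even (2 * (S ∩ Finset.Icc a (ℓ - 1)).card + (if ℓ ∈ S then 1 else 0)) ∧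
        0 < 2 * (S ∩ Finset.Icc a (ℓ - 1)).card + (if ℓ ∈ S then 1 else 0)),
      ((if a ≤ n ∧ n ≤ ℓ - 1 then (2 : ℤ) else 0) + (if n = ℓ then (1 : ℤ) else 0)))
  + ∑ p ∈ (Finset.Icc 1 ℓ ×ˢ Finset.Icc 1 (ℓ - 2)).filter
      (fun p => p.1 ≤ p.2 ∧
        Even ((S ∩ Finset.Icc p.1 p.2).card
          + 2 * (S ∩ Finset.Icc (p.2 + 1) (ℓ - 1)).card + (if ℓ ∈ S then 1 else 0)) ∧
        0 < (S ∩ Finset.Icc p.1 p.2).card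
          + 2 * (S ∩ Finset.Icc (p.2 + 1) (ℓ - 1)).card + (if ℓ ∈ S then 1 else 0)),
      ((if p.1 ≤ n ∧ n ≤ p.2 then (1 : ℤ) else 0)
        + (if p.2 + 1 ≤ n ∧ n ≤ ℓ - 1 then (2 : ℤ) else 0)
        + (if n = ℓ then (1 : ℤ) else 0))

open Finset

/-- `τ_ℓ(v)`, the last coordinate of `A v` for the Cartan matrix `A` of type `C_ℓ`. -/
def cartanLast (ℓ : ℕ) (v : ℕ → ℤ) : ℤ :=
  -v (ℓ - 1) + 2 * v ℓ

lemma cartanLast_add (ℓ : ℕ) (u w : ℕ → ℤ) :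
    cartanLast ℓ (fun n => u n + w n) = cartanLast ℓ u + cartanLast ℓ w := by
  unfold cartanLast
  ring

lemma cartanLast_sum {α : Type*} (ℓ : ℕ) (T : Finset α) (f : α → ℕ → ℤ) :
    cartanLast ℓ (fun n => ∑ p ∈ T, f p n) = ∑ p ∈ T, cartanLast ℓ (f p) := by
  simp only [cartanLast, mul_sum, ← sum_neg_distrib, ← sum_add_distrib]

lemma cartanLast_indicator_Icc {ℓ a b : ℕ} (hab : a ≤ b) (hb : b ≤ ℓ) (hne : ¬(a = ℓ ∧ b = ℓ)) :
    cartanLast ℓ (fun n => if a ≤ n ∧ n ≤ b then 1 else 0)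
      = (if b = ℓ then 1 else 0) - (if b = ℓ - 1 then 1 else 0) := by
  dsimp only [cartanLast]
  split_ifs <;> omega

/-- The `a` for which `γ_a + ⋯ + γ_c` is a relevant compact root. -/
def relevantStarts (S : Finset ℕ) (c : ℕ) : Finset ℕ :=
  (Icc 1 c).filter fun a => Even (S ∩ Icc a c).card ∧ 0 < (S ∩ Icc a c).card

lemma card_filter_snd_eq_card_relevantStarts (S : Finset ℕ) {ℓ c : ℕ} (hc : c ≤ ℓ) :
    (((Icc 1 ℓ ×ˢ Icc 1 ℓ).filter fun p => p.1 ≤ p.2 ∧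
        Even (S ∩ Icc p.1 p.2).card ∧ 0 < (S ∩ Icc p.1 p.2).card).filter
      fun p => p.2 = c).card = (relevantStarts S c).card := by
  suffices h : ((Icc 1 ℓ ×ˢ Icc 1 ℓ).filter fun p => p.1 ≤ p.2 ∧
        Even (S ∩ Icc p.1 p.2).card ∧ 0 < (S ∩ Icc p.1 p.2).card).filter
      (fun p => p.2 = c) = relevantStarts S c ×ˢ {c} by
    rw [h, card_product, card_singleton, mul_one]
  ext ⟨a, b⟩
  simp only [relevantStarts, mem_filter, mem_product, mem_Icc, mem_singleton]
  constructor
  · rintro ⟨⟨⟨⟨ha, -⟩, -⟩, hab, hrel⟩, rfl⟩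
    exact ⟨⟨⟨ha, hab⟩, hrel⟩, rfl⟩
  · rintro ⟨⟨⟨ha, hac⟩, hrel⟩, rfl⟩
    exact ⟨⟨⟨⟨ha, by omega⟩, by omega, hc⟩, hac, hrel⟩, rfl⟩

lemma card_inter_Icc_self_le_one (S : Finset ℕ) (c : ℕ) : (S ∩ Icc c c).card ≤ 1 :=
  (card_le_card inter_subset_right).trans (by simp)

lemma cartanLast_deltaC (ℓ : ℕ) (S : Finset ℕ) :
    cartanLast ℓ (deltaC ℓ S) = (relevantStarts S ℓ).card - (relevantStarts S (ℓ - 1)).card := by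
  unfold deltaC
  rw [cartanLast_add, cartanLast_add, cartanLast_sum, cartanLast_sum, cartanLast_sum,
    sum_eq_zero (s := (Icc 1 (ℓ - 1)).filter _),
    sum_eq_zero (s := (Icc 1 ℓ ×ˢ Icc 1 (ℓ - 2)).filter _), add_zero, add_zero]
  · rw [sum_congr rfl fun p hp => cartanLast_indicator_Icc ?_ ?_ ?_, sum_sub_distrib, sum_boole,
      sum_boole, card_filter_snd_eq_card_relevantStarts S le_rfl,
      card_filter_snd_eq_card_relevantStarts S (Nat.sub_le ℓ 1)]
    all_goals
      obtain ⟨⟨-, -, hb⟩, hab, heven, hpos⟩ := by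
        simpa only [mem_filter, mem_product, mem_Icc] using hp
    · exact hab
    · exact hb
    · rintro ⟨h1, h2⟩
      rw [h1, h2] at heven hpos
      have := card_inter_Icc_self_le_one S ℓ
      rw [Nat.even_iff] at heven
      omega
  all_goals
    intro p hp
    simp only [mem_filter, mem_product, mem_Icc] at hp
    dsimp only [cartanLast]
    split_ifs <;> omega

lemma sum_Ioc_eq_sum_range_sum_Ioc {M : Type*} [AddCommMonoid M] (g : ℕ → M) {i : ℕ → ℕ} {r : ℕ}
    (hi : MonotoneOn i (Set.Iic r)) :
    ∑ a ∈ Ioc (i 0) (i r), g a = ∑ j ∈ range r, ∑ a ∈ Ioc (i j) (i (j + 1)), g a := by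
  induction r with
  | zero => simp
  | succ r ih =>
    have hle {x y : ℕ} (hxy : x ≤ y) (hy : y ≤ r + 1) : i x ≤ i y :=
      hi (Set.mem_Iic.2 (hxy.trans hy)) (Set.mem_Iic.2 hy) hxy
    rw [sum_range_succ, ← ih (hi.mono (Set.Iic_subset_Iic.2 r.le_succ)),
      sum_Ioc_consecutive g (hle r.zero_le r.le_succ) (hle r.le_succ le_rfl)]

lemma sum_range_ite_even_sub {M : Type*} [AddCommMonoid M] (g : ℕ → M) (r : ℕ) :
    ∑ j ∈ range r, (if Even (r - j) then g j else 0) = ∑ k ∈ Icc 1 (r / 2), g (r - 2 * k) := by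
  rw [← sum_filter]
  refine sum_nbij' (fun j => (r - j) / 2) (fun k => r - 2 * k) ?_ ?_ ?_ ?_ ?_
  all_goals
    intro x hx
    simp only [mem_filter, mem_range, mem_Icc, Nat.even_iff] at hx ⊢
  · omega
  · omega
  · omega
  · omega
  · rw [show r - 2 * ((r - x) / 2) = x by omega]

lemma card_image_inter_Icc {i : ℕ → ℕ} {m r j a c : ℕ} (hi : StrictMonoOn i (Set.Iic (m + 1)))
    (hr : r ≤ m) (hrc : i r ≤ c) (hcr : c < i (r + 1))
    (hj : j ≤ m) (hja : i j < a) (haj : a ≤ i (j + 1)) :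
    ((Icc 1 m).image i ∩ Icc a c).card = r - j := by
  have hmem {k : ℕ} (hk : k ≤ m + 1) : k ∈ Set.Iic (m + 1) := hk
  have heq : (Icc 1 m).image i ∩ Icc a c = (Icc (j + 1) r).image i := by
    ext x
    simp only [mem_inter, mem_image, mem_Icc]
    constructor
    · rintro ⟨⟨k, ⟨-, hkm⟩, rfl⟩, hak, hkc⟩
      refine ⟨k, ⟨?_, ?_⟩, rfl⟩
      · exact (hi.lt_iff_lt (hmem (by omega)) (hmem (by omega))).1 (hja.trans_le hak)
      · exact Nat.lt_succ_iff.1 ((hi.lt_iff_lt (hmem (by omega)) (hmem (by omega))).1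
          (hkc.trans_lt hcr))
    · rintro ⟨k, ⟨hjk, hkr⟩, rfl⟩
      refine ⟨⟨k, ⟨by omega, by omega⟩, rfl⟩, ?_, ?_⟩
      · exact haj.trans ((hi.le_iff_le (hmem (by omega)) (hmem (by omega))).2 hjk)
      · exact ((hi.le_iff_le (hmem (by omega)) (hmem (by omega))).2 hkr).trans hrc
  rw [heq, card_image_of_injOn (hi.injOn.mono fun k hk => by
    simp only [coe_Icc, Set.mem_Icc, Set.mem_Iic] at hk ⊢; omega), Nat.card_Icc]
  omega

lemma card_relevantStarts_image {i : ℕ → ℕ} {m r c : ℕ} (hi : StrictMonoOn i (Set.Iic (m + 1)))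
    (h0 : i 0 = 0) (hr : r ≤ m) (hrc : i r ≤ c) (hcr : c < i (r + 1)) :
    ((relevantStarts ((Icc 1 m).image i) c).card : ℤ)
      = ∑ j ∈ range r, if Even (r - j) then (i (j + 1) : ℤ) - i j else 0 := by
  have hcard {j a : ℕ} (hj : j ≤ m) (hja : i j < a) (haj : a ≤ i (j + 1)) :=
    card_image_inter_Icc hi hr hrc hcr hj hja haj
  have hle {x y : ℕ} (hxy : x ≤ y) (hy : y ≤ m + 1) : i x ≤ i y :=
    (hi.le_iff_le (Set.mem_Iic.2 (hxy.trans hy)) (Set.mem_Iic.2 hy)).2 hxy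
  have hIcc : Icc 1 c = Ioc (i 0) c := by rw [h0]; rfl
  rw [relevantStarts, natCast_card_filter, hIcc,
    ← sum_Ioc_consecutive _ (hle r.zero_le (by omega)) hrc,
    sum_Ioc_eq_sum_range_sum_Ioc _ fun _ _ _ hy hxy =>
      hle hxy ((Set.mem_Iic.1 hy).trans (by omega)),
    sum_eq_zero (s := Ioc (i r) c), add_zero]
  · refine sum_congr rfl fun j hj => ?_
    have hpos : 0 < r - j := by rw [mem_range] at hj; omega
    rw [sum_congr rfl (g := fun _ => if Even (r - j) then (1 : ℤ) else 0) fun a ha => by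
      rw [hcard (by omega) (mem_Ioc.1 ha).1 (mem_Ioc.1 ha).2]; simp only [hpos, and_true]]
    split_ifs
    · rw [sum_const, Nat.card_Ioc, nsmul_one, Nat.cast_sub (hle (j.le_add_right 1) (by omega))]
    · exact sum_const_zero
  · intro a ha
    rw [mem_Ioc] at ha
    rw [hcard (j := r) hr ha.1 (ha.2.trans hcr.le), Nat.sub_self, if_neg (by omega)]

theorem stmt11_general (ℓ m : ℕ) (hm : 1 ≤ m)
    (i : ℕ → ℕ) (h0 : i 0 = 0)
    (hmono : ∀ k ≤ m, i k < i (k + 1)) (him : i m = ℓ) :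
    -(deltaC ℓ ((Finset.Icc 1 m).image i) (ℓ - 1))
      + 2 * deltaC ℓ ((Finset.Icc 1 m).image i) ℓ
      = (∑ k ∈ Finset.Icc 1 (m / 2),
          ((i (m - 2 * k + 1) : ℤ) - (i (m - 2 * k) : ℤ)))
        - (∑ k ∈ Finset.Icc 1 ((m + 1) / 2 - 1),
          ((i (m - 2 * k) : ℤ) - (i (m - 2 * k - 1) : ℤ))) := by
  have hi : StrictMonoOn i (Set.Iic (m + 1)) :=
    strictMonoOn_Iic_of_lt_succ fun k hk => hmono k (Nat.lt_succ_iff.1 hk)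
  have hprev : i (m - 1) < ℓ := by
    simpa only [Nat.sub_add_cancel hm, him] using hmono (m - 1) (Nat.sub_le m 1)
  change cartanLast ℓ _ = _
  rw [cartanLast_deltaC,
    card_relevantStarts_image hi h0 le_rfl him.le (him ▸ hmono m le_rfl),
    card_relevantStarts_image hi h0 (Nat.sub_le m 1) (Nat.le_sub_one_of_lt hprev)
      (by rw [Nat.sub_add_cancel hm]; omega),
    sum_range_ite_even_sub, sum_range_ite_even_sub, show (m + 1) / 2 - 1 = (m - 1) / 2 by omega]
  congr 1
  refine sum_congr rfl fun k hk => ?_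
  rw [mem_Icc] at hk
  rw [show m - 1 - 2 * k + 1 = m - 2 * k by omega, show m - 1 - 2 * k = m - 2 * k - 1 by omega]

/-- type `C_ℓ`, `i_m = ℓ`: `−δᶜ_{ℓ−1} + 2δᶜ_ℓ = S₂(m) − T₁(m)`. -/
theorem stmt11 (ℓ m : ℕ) (hℓ : 3 ≤ ℓ) (hm : 1 ≤ m)
    (i : ℕ → ℕ) (h0 : i 0 = 0)
    (hmono : ∀ k ≤ m, i k < i (k + 1)) (him : i m = ℓ) :
    -(deltaC ℓ ((Finset.Icc 1 m).image i) (ℓ - 1))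
      + 2 * deltaC ℓ ((Finset.Icc 1 m).image i) ℓ
      = (∑ k ∈ Finset.Icc 1 (m / 2),
          ((i (m - 2 * k + 1) : ℤ) - (i (m - 2 * k) : ℤ)))
        - (∑ k ∈ Finset.Icc 1 ((m + 1) / 2 - 1),
          ((i (m - 2 * k) : ℤ) - (i (m - 2 * k - 1) : ℤ))) :=
  stmt11_general ℓ m hm i h0 hmono him
end

section
/- Let ℓ ≥ 3 and let S = {i₁ < ⋯ < i_m} ⊆ {1,…,ℓ} with i_m = ℓ−1 and ℓ ∉ S (convention i₀ = 0, so i_{m−1} denotes the predecessor of ℓ−1 in S, or 0). In the root system of type C_ℓ with compactness and relevance defined by the parity rule (α = Σ n_i γ_i is compact iff Σ_{i∈S} n_i is even; relevant iff moreover Σ_{i∈S} n_i > 0), let δᶜ ∈ ℤ^ℓ be the coefficient vector of the sum of all relevant compact positive roots. Then −δᶜ_{ℓ−2} + 2δᶜ_{ℓ−1} − 2δᶜ_ℓ = ℓ − i_{m−1}. -/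
open Finset

/-- The `(ℓ-1)`-st entry of `A v`, where `A` is the Cartan matrix of type `C_ℓ`
(`A_{ℓ-1,ℓ} = -2`). -/
def cartanRowC (ℓ : ℕ) (v : ℕ → ℤ) : ℤ := -v (ℓ - 2) + 2 * v (ℓ - 1) - 2 * v ℓ

lemma cartanRowC_add_three (L : ℕ) (v : ℕ → ℤ) :
    cartanRowC (L + 3) v = -v (L + 1) + 2 * v (L + 2) - 2 * v (L + 3) := rfl

lemma cartanRowC_add (ℓ : ℕ) (v w : ℕ → ℤ) :
    cartanRowC ℓ (fun n => v n + w n) = cartanRowC ℓ v + cartanRowC ℓ w := by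
  unfold cartanRowC; ring

lemma cartanRowC_sum {ι : Type*} (ℓ : ℕ) (s : Finset ι) (f : ι → ℕ → ℤ) :
    cartanRowC ℓ (fun n => ∑ x ∈ s, f x n) = ∑ x ∈ s, cartanRowC ℓ (f x) := by
  simp only [cartanRowC, sum_sub_distrib, sum_add_distrib, sum_neg_distrib, mul_sum]

lemma sum_Icc_one_eq_sum_Ioc {M : Type*} [AddCommMonoid M] {f : ℕ → M} {k : ℕ} (N : ℕ)
    (hf : ∀ b ≤ k, f b = 0) : ∑ b ∈ Icc 1 N, f b = ∑ b ∈ Ioc k N, f b := by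
  refine (sum_subset (fun b hb => ?_) fun b hb hbk => hf b ?_).symm
  · simp only [mem_Ioc, mem_Icc] at hb ⊢; omega
  · simp only [mem_Ioc, mem_Icc] at hb hbk; omega

lemma sum_Ioc_add_three {M : Type*} [AddCommMonoid M] (f : ℕ → M) (L : ℕ) :
    ∑ b ∈ Ioc L (L + 3), f b = f (L + 1) + f (L + 2) + f (L + 3) := by
  rw [show Ioc L (L + 3) = {L + 1, L + 2, L + 3} by ext; simp; omega,
    sum_insert (by simp), sum_pair (by omega), add_assoc]

section CardInterIcc

variable (S : Finset ℕ) {a b : ℕ}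

lemma card_inter_Icc_eq_zero_of_lt (h : b < a) : #(S ∩ Icc a b) = 0 := by
  simp [Icc_eq_empty_of_lt h]

lemma card_inter_Icc_add_one_of_mem (hab : a ≤ b + 1) (hb : b + 1 ∈ S) :
    #(S ∩ Icc a (b + 1)) = #(S ∩ Icc a b) + 1 := by
  rw [← insert_Icc_right_eq_Icc_add_one hab, inter_insert_of_mem hb,
    card_insert_of_notMem (by simp)]

lemma card_inter_Icc_add_one_of_notMem (hb : b + 1 ∉ S) :
    #(S ∩ Icc a (b + 1)) = #(S ∩ Icc a b) := by
  by_cases hab : a ≤ b + 1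
  · rw [← insert_Icc_right_eq_Icc_add_one hab, inter_insert_of_notMem hb]
  · rw [Icc_eq_empty (by omega), Icc_eq_empty (by omega)]

end CardInterIcc

section Families

variable {L : ℕ} {S : Finset ℕ}

/- The three root families of `deltaC ℓ S` for `ℓ = L + 3`, so that the indices `ℓ-2, ℓ-1, ℓ`
are `L+1, L+2, L+3`. -/

lemma sum_cartanRowC_intervalRoots (hS2 : L + 2 ∈ S) (hS3 : L + 3 ∉ S) :
    ∑ p ∈ Icc 1 (L + 3) ×ˢ Icc 1 (L + 3) with
        p.1 ≤ p.2 ∧ Even #(S ∩ Icc p.1 p.2) ∧ 0 < #(S ∩ Icc p.1 p.2),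
      cartanRowC (L + 3) (fun n => if p.1 ≤ n ∧ n ≤ p.2 then 1 else 0)
      = -∑ a ∈ Icc 1 (L + 3),
          if a ≤ L + 1 ∧ Even #(S ∩ Icc a (L + 1)) ∧ 0 < #(S ∩ Icc a (L + 1)) then 1 else 0 := by
  rw [sum_filter, sum_product, ← sum_neg_distrib]
  refine sum_congr rfl fun a ha => ?_
  rw [sum_Icc_one_eq_sum_Ioc (k := L) _ fun b hb => by
    rw [cartanRowC_add_three]; split_ifs <;> omega]
  rw [sum_Ioc_add_three]
  simp only [cartanRowC_add_three]
  have h3 : #(S ∩ Icc a (L + 3)) = #(S ∩ Icc a (L + 2)) := card_inter_Icc_add_one_of_notMem S hS3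
  have h1 : #(S ∩ Icc (L + 2) (L + 1)) = 0 := card_inter_Icc_eq_zero_of_lt S (by omega)
  obtain ha | rfl | rfl : a ≤ L + 1 ∨ a = L + 2 ∨ a = L + 3 := by
    rw [mem_Icc] at ha; omega
  · rw [h3, card_inter_Icc_add_one_of_mem S (by omega) hS2]
    by_cases hc : Even #(S ∩ Icc a (L + 1)) <;>
      simp [hc, ha, neg_ite, Nat.even_add_one, show a ≤ L + 2 by omega, show a ≤ L + 3 by omega]
  · rw [h3, card_inter_Icc_add_one_of_mem S (by omega) hS2, h1]
    simp
  · rw [h3, card_inter_Icc_eq_zero_of_lt S (by omega)]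
    simp

lemma sum_cartanRowC_longRoots (hS2 : L + 2 ∈ S) :
    ∑ a ∈ Icc 1 (L + 2) with Even (2 * #(S ∩ Icc a (L + 2))) ∧ 0 < 2 * #(S ∩ Icc a (L + 2)),
      cartanRowC (L + 3) (fun n => (if a ≤ n ∧ n ≤ L + 2 then 2 else 0) + if n = L + 3 then 1 else 0)
      = 2 := by
  have hrel : ∀ a ∈ Icc 1 (L + 2),
      Even (2 * #(S ∩ Icc a (L + 2))) ∧ 0 < 2 * #(S ∩ Icc a (L + 2)) := fun a ha =>
    ⟨even_two_mul _, Nat.mul_pos two_pos <| card_pos.mpr ⟨L + 2, by simp_all⟩⟩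
  rw [filter_true_of_mem hrel, sum_Icc_one_eq_sum_Ioc (k := L + 1) _ fun a ha => by
    rw [cartanRowC_add_three]; split_ifs <;> omega]
  rw [Nat.Ioc_succ_singleton, sum_singleton, cartanRowC_add_three]
  norm_num

lemma sum_cartanRowC_mixedRoots (hS2 : L + 2 ∈ S) :
    ∑ p ∈ Icc 1 (L + 3) ×ˢ Icc 1 (L + 1) with p.1 ≤ p.2 ∧
        Even (#(S ∩ Icc p.1 p.2) + 2 * #(S ∩ Icc (p.2 + 1) (L + 2))) ∧
        0 < #(S ∩ Icc p.1 p.2) + 2 * #(S ∩ Icc (p.2 + 1) (L + 2)),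
      cartanRowC (L + 3) (fun n => ((if p.1 ≤ n ∧ n ≤ p.2 then 1 else 0)
        + if p.2 + 1 ≤ n ∧ n ≤ L + 2 then 2 else 0) + if n = L + 3 then 1 else 0)
      = ∑ a ∈ Icc 1 (L + 3), if a ≤ L + 1 ∧ Even #(S ∩ Icc a (L + 1)) then 1 else 0 := by
  rw [sum_filter, sum_product]
  refine sum_congr rfl fun a _ => ?_
  rw [sum_Icc_one_eq_sum_Ioc (k := L) _ fun b hb => by
    rw [cartanRowC_add_three]; split_ifs <;> omega]
  have hS2' : #(S ∩ Icc (L + 2) (L + 2)) = 1 := by simp [hS2]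
  rw [Nat.Ioc_succ_singleton, sum_singleton, cartanRowC_add_three, hS2']
  by_cases ha : a ≤ L + 1 <;> simp [ha, Nat.even_add]

end Families

theorem cartanRowC_deltaC {L : ℕ} {S : Finset ℕ} (hS2 : L + 2 ∈ S) (hS3 : L + 3 ∉ S) :
    cartanRowC (L + 3) (deltaC (L + 3) S)
      = 2 + #{a ∈ Icc 1 (L + 1) | Disjoint S (Icc a (L + 1))} := by
  unfold deltaC
  rw [cartanRowC_add, cartanRowC_add, cartanRowC_sum, cartanRowC_sum, cartanRowC_sum]
  simp only [show L + 3 - 1 = L + 2 from rfl, show L + 3 - 2 = L + 1 from rfl, if_neg hS3,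
    add_zero]
  rw [sum_cartanRowC_intervalRoots hS2 hS3, sum_cartanRowC_longRoots hS2,
    sum_cartanRowC_mixedRoots hS2]
  have hcount : (∑ a ∈ Icc 1 (L + 3), if a ≤ L + 1 ∧ Even #(S ∩ Icc a (L + 1)) then 1 else 0)
      - (∑ a ∈ Icc 1 (L + 3),
          if a ≤ L + 1 ∧ Even #(S ∩ Icc a (L + 1)) ∧ 0 < #(S ∩ Icc a (L + 1)) then 1 else 0)
      = (#{a ∈ Icc 1 (L + 1) | Disjoint S (Icc a (L + 1))} : ℤ) := by
    rw [← sum_sub_distrib, show {a ∈ Icc 1 (L + 1) | Disjoint S (Icc a (L + 1))}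
        = {a ∈ Icc 1 (L + 3) | a ≤ L + 1 ∧ #(S ∩ Icc a (L + 1)) = 0} by
      ext a; simp only [mem_filter, mem_Icc, card_eq_zero, disjoint_iff_inter_eq_empty]; grind,
      ← sum_boole]
    refine sum_congr rfl fun a _ => ?_
    simp only [Nat.even_iff]
    split_ifs <;> omega
  linear_combination hcount

lemma card_filter_disjoint_Icc {S : Finset ℕ} {p N : ℕ} (hpN : p ≤ N) (hp : p = 0 ∨ p ∈ S)
    (hmax : ∀ x ∈ S, x ≤ N → x ≤ p) : #{a ∈ Icc 1 N | Disjoint S (Icc a N)} = N - p := by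
  rw [← Nat.card_Ioc]
  congr 1
  ext a
  simp only [mem_filter, mem_Icc, mem_Ioc, disjoint_left]
  constructor
  · rintro ⟨⟨ha1, haN⟩, hdisj⟩
    refine ⟨Nat.lt_of_not_le fun hap => ?_, haN⟩
    rcases hp with rfl | hpS
    · omega
    · exact hdisj hpS ⟨hap, hpN⟩
  · rintro ⟨hpa, haN⟩
    exact ⟨⟨by omega, haN⟩, fun x hx hxI => by have := hmax x hx hxI.2; omega⟩

theorem stmt12_general (ℓ m : ℕ) (hℓ : 3 ≤ ℓ)
    (i : ℕ → ℕ) (h0 : i 0 = 0)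
    (hmono : ∀ k ≤ m, i k < i (k + 1)) (him : i m = ℓ - 1)
    (hnot : ℓ ∉ (Finset.Icc 1 m).image i) :
    -(deltaC ℓ ((Finset.Icc 1 m).image i) (ℓ - 2))
      + 2 * deltaC ℓ ((Finset.Icc 1 m).image i) (ℓ - 1)
      - 2 * deltaC ℓ ((Finset.Icc 1 m).image i) ℓ
      = (ℓ : ℤ) - (i (m - 1) : ℤ) := by
  obtain ⟨L, rfl⟩ : ∃ L, ℓ = L + 3 := ⟨ℓ - 3, by omega⟩
  have hm : 1 ≤ m := Nat.one_le_iff_ne_zero.mpr fun h => by simp [h, h0] at him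
  have hi : StrictMonoOn i (Set.Iic m) := strictMonoOn_Iic_of_lt_succ fun k hk => hmono k hk.le
  have hlast : i (m - 1) < i m := hi (by simp) (by simp) (by omega)
  have hS2 : L + 2 ∈ (Icc 1 m).image i := mem_image.mpr ⟨m, by simp [hm], him⟩
  have hp : i (m - 1) = 0 ∨ i (m - 1) ∈ (Icc 1 m).image i := by
    rcases Nat.eq_zero_or_pos (m - 1) with h | h
    · exact .inl (h ▸ h0)
    · exact .inr (mem_image_of_mem i (mem_Icc.mpr ⟨h, by omega⟩))
  have hmax : ∀ x ∈ (Icc 1 m).image i, x ≤ L + 1 → x ≤ i (m - 1) := by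
    rintro _ hx hxL
    obtain ⟨k, hk, rfl⟩ := mem_image.mp hx
    rw [mem_Icc] at hk
    have hkm : k ≤ m - 1 := by
      by_contra!
      obtain rfl : k = m := by omega
      omega
    exact hi.monotoneOn (Set.mem_Iic.mpr (by omega)) (Set.mem_Iic.mpr (by omega)) hkm
  change cartanRowC (L + 3) (deltaC (L + 3) _) = _
  rw [cartanRowC_deltaC hS2 hnot, card_filter_disjoint_Icc (by omega) hp hmax]
  push_cast
  omega

/-- type `C_ℓ`, `i_m = ℓ−1`, `ℓ ∉ S`:
`−δᶜ_{ℓ−2} + 2δᶜ_{ℓ−1} − 2δᶜ_ℓ = ℓ − i_{m−1}`. -/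
theorem stmt12 (ℓ m : ℕ) (hℓ : 3 ≤ ℓ) (hm : 1 ≤ m)
    (i : ℕ → ℕ) (h0 : i 0 = 0)
    (hmono : ∀ k ≤ m, i k < i (k + 1)) (him : i m = ℓ - 1)
    (hnot : ℓ ∉ (Finset.Icc 1 m).image i) :
    -(deltaC ℓ ((Finset.Icc 1 m).image i) (ℓ - 2))
      + 2 * deltaC ℓ ((Finset.Icc 1 m).image i) (ℓ - 1)
      - 2 * deltaC ℓ ((Finset.Icc 1 m).image i) ℓ
      = (ℓ : ℤ) - (i (m - 1) : ℤ) :=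
  stmt12_general ℓ m hℓ i h0 hmono him hnot
end

section
/- Let ℓ ≥ 4 and let S = {i₁ < ⋯ < i_m} ⊆ {1,…,ℓ} be nonempty with i_m ≤ ℓ−3 (convention i₀ = 0). In the root system of type D_ℓ, positive roots are: Σ_{i=a}^{b} γ_i (1 ≤ a ≤ b ≤ ℓ−2), Σ_{i=a}^{ℓ−2} γ_i + γ_ν for ν ∈ {ℓ−1, ℓ} (1 ≤ a ≤ ℓ−2), Σ_{i=a}^{ℓ−2} γ_i + γ_{ℓ−1} + γ_ℓ (1 ≤ a ≤ ℓ−2), and Σ_{i=a}^{b} γ_i + Σ_{i=b+1}^{ℓ−2} 2γ_i + γ_{ℓ−1} + γ_ℓ (1 ≤ a ≤ b ≤ ℓ−3), together with γ_{ℓ−1}, γ_ℓ; a root α = Σ n_i γ_i is compact iff Σ_{i∈S} n_i is even, and relevant iff moreover Σ_{i∈S} n_i > 0. Let δᶜ ∈ ℤ^ℓ be the coefficient vector of the sum of all relevant compact positive roots. Then −δᶜ_{i_m−1} + 2δᶜ_{i_m} − δᶜ_{i_m+1} = i_m − i_{m−1} − 1 (with δᶜ_0 = 0). -/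
/-!
`δᶜ` is a sum of coefficient vectors of roots, so its second difference at `n₀ = i_m` is the sum
of the second differences of their coefficient functions. Since `n₀ = max S`, a relevant root
meets `S` at least twice, so its support starts strictly before `n₀`; the second difference at
`n₀` of `1_{[a,b]}` is then `[b = n₀] - [b + 1 = n₀]`, and that of `1_{[a,b]} + 2·1_{[b+1,ℓ-2]}`
is the opposite. Roots ending at `n₀` of the two shapes are in bijection and cancel. A root
`Σ_{a}^{n₀-1} γ_i + 2 Σ_{n₀}^{ℓ-2} γ_i + …` is relevant iff `|S ∩ [a, n₀-1]|` is even, and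
`Σ_{a}^{n₀-1} γ_i` iff moreover that number is positive; the difference is the number of
`a ∈ (i_{m-1}, n₀ - 1]`, namely `i_m - i_{m-1} - 1`.
-/

/-- `n`-th coefficient of the sum of all relevant compact positive roots of type `D_ℓ`.
Positive roots: `Σ_{i=a}^{b} γ_i` (`1 ≤ a ≤ b ≤ ℓ−2`), `Σ_{i=a}^{ℓ−2} γ_i + γ_{ℓ−1}`,
`Σ_{i=a}^{ℓ−2} γ_i + γ_ℓ`, `Σ_{i=a}^{ℓ−2} γ_i + γ_{ℓ−1} + γ_ℓ` (`1 ≤ a ≤ ℓ−2`),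
`Σ_{i=a}^{b} γ_i + Σ_{i=b+1}^{ℓ−2} 2γ_i + γ_{ℓ−1} + γ_ℓ` (`1 ≤ a ≤ b ≤ ℓ−3`), and
the simple roots `γ_{ℓ−1}`, `γ_ℓ`; a root `Σ nᵢγᵢ` is compact iff `Σ_{i∈S} nᵢ` is even,
relevant iff moreover `Σ_{i∈S} nᵢ > 0`. -/
def deltaD (ℓ : ℕ) (S : Finset ℕ) (n : ℕ) : ℤ :=
  (∑ p ∈ (Finset.Icc 1 (ℓ - 2) ×ˢ Finset.Icc 1 (ℓ - 2)).filter
      (fun p => p.1 ≤ p.2 ∧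
        Even ((S ∩ Finset.Icc p.1 p.2).card) ∧
        0 < (S ∩ Finset.Icc p.1 p.2).card),
      (if p.1 ≤ n ∧ n ≤ p.2 then (1 : ℤ) else 0))
  + (∑ a ∈ (Finset.Icc 1 (ℓ - 2)).filter
      (fun a =>
        Even ((S ∩ Finset.Icc a (ℓ - 2)).card + (if ℓ - 1 ∈ S then 1 else 0)) ∧
        0 < (S ∩ Finset.Icc a (ℓ - 2)).card + (if ℓ - 1 ∈ S then 1 else 0)),
      ((if a ≤ n ∧ n ≤ ℓ - 2 then (1 : ℤ) else 0) + (if n = ℓ - 1 then (1 : ℤ) else 0)))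
  + (∑ a ∈ (Finset.Icc 1 (ℓ - 2)).filter
      (fun a =>
        Even ((S ∩ Finset.Icc a (ℓ - 2)).card + (if ℓ ∈ S then 1 else 0)) ∧
        0 < (S ∩ Finset.Icc a (ℓ - 2)).card + (if ℓ ∈ S then 1 else 0)),
      ((if a ≤ n ∧ n ≤ ℓ - 2 then (1 : ℤ) else 0) + (if n = ℓ then (1 : ℤ) else 0)))
  + (∑ a ∈ (Finset.Icc 1 (ℓ - 2)).filter
      (fun a =>
        Even ((S ∩ Finset.Icc a (ℓ - 2)).card + (if ℓ - 1 ∈ S then 1 else 0)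
          + (if ℓ ∈ S then 1 else 0)) ∧
        0 < (S ∩ Finset.Icc a (ℓ - 2)).card + (if ℓ - 1 ∈ S then 1 else 0)
          + (if ℓ ∈ S then 1 else 0)),
      ((if a ≤ n ∧ n ≤ ℓ - 2 then (1 : ℤ) else 0)
        + (if n = ℓ - 1 ∨ n = ℓ then (1 : ℤ) else 0)))
  + (∑ p ∈ (Finset.Icc 1 (ℓ - 3) ×ˢ Finset.Icc 1 (ℓ - 3)).filter
      (fun p => p.1 ≤ p.2 ∧
        Even ((S ∩ Finset.Icc p.1 p.2).card
          + 2 * (S ∩ Finset.Icc (p.2 + 1) (ℓ - 2)).card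
          + (if ℓ - 1 ∈ S then 1 else 0) + (if ℓ ∈ S then 1 else 0)) ∧
        0 < (S ∩ Finset.Icc p.1 p.2).card
          + 2 * (S ∩ Finset.Icc (p.2 + 1) (ℓ - 2)).card
          + (if ℓ - 1 ∈ S then 1 else 0) + (if ℓ ∈ S then 1 else 0)),
      ((if p.1 ≤ n ∧ n ≤ p.2 then (1 : ℤ) else 0)
        + (if p.2 + 1 ≤ n ∧ n ≤ ℓ - 2 then (2 : ℤ) else 0)
        + (if n = ℓ - 1 ∨ n = ℓ then (1 : ℤ) else 0)))
  + (if Even (if ℓ - 1 ∈ S then 1 else 0) ∧ 0 < (if ℓ - 1 ∈ S then 1 else 0) ∧ n = ℓ - 1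
      then (1 : ℤ) else 0)
  + (if Even (if ℓ ∈ S then 1 else 0) ∧ 0 < (if ℓ ∈ S then 1 else 0) ∧ n = ℓ
      then (1 : ℤ) else 0)

open Finset

/-- Row `n` of the Cartan matrix applied to `f`, at a node of the `A`-type part of the diagram
(note that `n - 1` truncates to `0` at `n = 0`). -/
def secondDiff (f : ℕ → ℤ) (n : ℕ) : ℤ := -f (n - 1) + 2 * f n - f (n + 1)

lemma secondDiff_add (f g : ℕ → ℤ) (n : ℕ) :
    secondDiff (fun k => f k + g k) n = secondDiff f n + secondDiff g n := by
  unfold secondDiff; ring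

lemma secondDiff_sum {α : Type*} (F : Finset α) (g : α → ℕ → ℤ) (n : ℕ) :
    secondDiff (fun k => ∑ p ∈ F, g p k) n = ∑ p ∈ F, secondDiff (g p) n := by
  simp only [secondDiff, mul_sum, sum_neg_distrib, sum_add_distrib, sum_sub_distrib]

lemma secondDiff_const (c : ℤ) (n : ℕ) : secondDiff (fun _ => c) n = 0 := by
  unfold secondDiff; ring

lemma sum_secondDiff_indicator_Icc (F : Finset (ℕ × ℕ)) (n : ℕ)
    (hF : ∀ p ∈ F, p.1 ≤ p.2 ∧ p.1 < n) :
    ∑ p ∈ F, secondDiff (fun k => if p.1 ≤ k ∧ k ≤ p.2 then (1 : ℤ) else 0) n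
      = #(F.filter (·.2 = n)) - #(F.filter (·.2 + 1 = n)) := by
  rw [← sum_boole, ← sum_boole, ← sum_sub_distrib]
  refine sum_congr rfl fun p hp => ?_
  obtain ⟨hab, han⟩ := hF p hp
  simp only [secondDiff]
  split_ifs <;> omega

lemma sum_secondDiff_indicator_Icc_add_eq_zero (F : Finset ℕ) (n m : ℕ) (e : ℕ → ℤ)
    (hF : ∀ a ∈ F, a < n) (hm : n + 1 ≤ m) (he : ∀ k ≤ n + 1, e k = 0) :
    ∑ a ∈ F, secondDiff (fun k => (if a ≤ k ∧ k ≤ m then (1 : ℤ) else 0) + e k) n = 0 := by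
  refine sum_eq_zero fun a ha => ?_
  have han := hF a ha
  simp only [secondDiff]
  rw [he _ (by omega), he _ (by omega), he _ le_rfl]
  split_ifs <;> omega

lemma sum_secondDiff_indicator_Icc_add_two_indicator (F : Finset (ℕ × ℕ)) (n m : ℕ)
    (e : ℕ → ℤ) (hF : ∀ p ∈ F, p.1 ≤ p.2 ∧ p.1 < n) (hm : n + 1 ≤ m)
    (he : ∀ k ≤ n + 1, e k = 0) :
    ∑ p ∈ F, secondDiff (fun k => (if p.1 ≤ k ∧ k ≤ p.2 then (1 : ℤ) else 0)
        + (if p.2 + 1 ≤ k ∧ k ≤ m then 2 else 0) + e k) n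
      = #(F.filter (·.2 + 1 = n)) - #(F.filter (·.2 = n)) := by
  rw [← sum_boole, ← sum_boole, ← sum_sub_distrib]
  refine sum_congr rfl fun p hp => ?_
  obtain ⟨hab, han⟩ := hF p hp
  simp only [secondDiff]
  rw [he _ (by omega), he _ (by omega), he _ le_rfl]
  split_ifs <;> omega

/-- Index sets of the relevant compact roots `Σ_{a}^{b} γ_i`, `Σ_{a}^{ℓ-2} γ_i + …` and
`Σ_{a}^{b} γ_i + 2 Σ_{b+1}^{ℓ-2} γ_i + γ_{ℓ-1} + γ_ℓ`: the filters in `deltaD` reduce to these once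
`ℓ - 1, ℓ ∉ S`. They are abbreviations so that rewriting sees through them. -/
abbrev shortRoots (ℓ : ℕ) (S : Finset ℕ) : Finset (ℕ × ℕ) :=
  (Icc 1 (ℓ - 2) ×ˢ Icc 1 (ℓ - 2)).filter
    (fun p => p.1 ≤ p.2 ∧ Even #(S ∩ Icc p.1 p.2) ∧ 0 < #(S ∩ Icc p.1 p.2))

abbrev tailRoots (ℓ : ℕ) (S : Finset ℕ) : Finset ℕ :=
  (Icc 1 (ℓ - 2)).filter (fun a => Even #(S ∩ Icc a (ℓ - 2)) ∧ 0 < #(S ∩ Icc a (ℓ - 2)))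

abbrev longRoots (ℓ : ℕ) (S : Finset ℕ) : Finset (ℕ × ℕ) :=
  (Icc 1 (ℓ - 3) ×ˢ Icc 1 (ℓ - 3)).filter
    (fun p => p.1 ≤ p.2 ∧ Even (#(S ∩ Icc p.1 p.2) + 2 * #(S ∩ Icc (p.2 + 1) (ℓ - 2))) ∧
      0 < #(S ∩ Icc p.1 p.2) + 2 * #(S ∩ Icc (p.2 + 1) (ℓ - 2)))

section
variable {ℓ n0 nm : ℕ} {S : Finset ℕ}

lemma card_inter_Icc_eq_zero (hmax : ∀ x ∈ S, x ≤ n0) {a b : ℕ} (ha : n0 < a) :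
    #(S ∩ Icc a b) = 0 := by
  refine card_eq_zero.mpr (eq_empty_iff_forall_notMem.mpr fun x hx => ?_)
  rw [mem_inter, mem_Icc] at hx
  have := hmax x hx.1
  omega

lemma card_inter_Icc_eq_one (hmax : ∀ x ∈ S, x ≤ n0) (hn0 : n0 ∈ S) {b : ℕ} (hb : n0 ≤ b) :
    #(S ∩ Icc n0 b) = 1 := by
  refine card_eq_one.mpr ⟨n0, ext fun x => ?_⟩
  simp only [mem_inter, mem_Icc, mem_singleton]
  constructor
  · rintro ⟨hx, hx1, -⟩
    exact le_antisymm (hmax x hx) hx1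
  · rintro rfl
    exact ⟨hn0, le_rfl, hb⟩

lemma lt_of_even_card_inter_Icc (hmax : ∀ x ∈ S, x ≤ n0) {a b : ℕ}
    (heven : Even #(S ∩ Icc a b)) (hpos : 0 < #(S ∩ Icc a b)) : a < n0 := by
  by_contra! ha
  have hle : #(S ∩ Icc a b) ≤ 1 := card_le_one.mpr fun x hx y hy => by
    rw [mem_inter, mem_Icc] at hx hy
    have := hmax x hx.1
    have := hmax y hy.1
    omega
  obtain ⟨r, hr⟩ := heven
  omega

lemma card_inter_Icc_eq_zero_iff (hpred : ∀ x ∈ S, x < n0 → x ≤ nm) (hnm : nm = 0 ∨ nm ∈ S)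
    (hlt : nm < n0) {a b : ℕ} (ha : 1 ≤ a) (hb : b + 1 = n0) : #(S ∩ Icc a b) = 0 ↔ nm < a := by
  rw [card_eq_zero, eq_empty_iff_forall_notMem]
  constructor
  · intro h
    by_contra! hle
    rcases hnm with rfl | hnmS
    · omega
    · exact h nm (mem_inter.mpr ⟨hnmS, mem_Icc.mpr ⟨hle, by omega⟩⟩)
  · intro ha x hx
    rw [mem_inter, mem_Icc] at hx
    have := hpred x hx.1 (by omega)
    omega

lemma fst_lt_of_mem_shortRoots (hmax : ∀ x ∈ S, x ≤ n0) {p : ℕ × ℕ}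
    (hp : p ∈ shortRoots ℓ S) : p.1 ≤ p.2 ∧ p.1 < n0 := by
  obtain ⟨-, hab, heven, hpos⟩ := mem_filter.mp hp
  exact ⟨hab, lt_of_even_card_inter_Icc hmax heven hpos⟩

lemma lt_of_mem_tailRoots (hmax : ∀ x ∈ S, x ≤ n0) {a : ℕ} (ha : a ∈ tailRoots ℓ S) :
    a < n0 := by
  obtain ⟨-, heven, hpos⟩ := mem_filter.mp ha
  exact lt_of_even_card_inter_Icc hmax heven hpos

lemma fst_lt_of_mem_longRoots (hmax : ∀ x ∈ S, x ≤ n0) {p : ℕ × ℕ}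
    (hp : p ∈ longRoots ℓ S) : p.1 ≤ p.2 ∧ p.1 < n0 := by
  obtain ⟨-, hab, heven, hpos⟩ := mem_filter.mp hp
  refine ⟨hab, lt_of_not_ge fun ha => ?_⟩
  rw [card_inter_Icc_eq_zero hmax (by omega : n0 < p.2 + 1), mul_zero, add_zero] at heven hpos
  exact absurd (lt_of_even_card_inter_Icc hmax heven hpos) (by omega)

lemma filter_shortRoots_snd_eq (hmax : ∀ x ∈ S, x ≤ n0) (hle : n0 ≤ ℓ - 3) :
    (shortRoots ℓ S).filter (·.2 = n0) = (longRoots ℓ S).filter (·.2 = n0) := by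
  ext ⟨a, b⟩
  simp only [shortRoots, longRoots, mem_filter, mem_product, mem_Icc]
  rcases eq_or_ne b n0 with rfl | hb
  · rw [card_inter_Icc_eq_zero hmax (Nat.lt_succ_self b), mul_zero, add_zero]
    constructor <;> rintro ⟨⟨⟨⟨ha1, -⟩, hb1, -⟩, hab, hrel⟩, -⟩ <;>
      exact ⟨⟨⟨⟨ha1, by omega⟩, hb1, by omega⟩, hab, hrel⟩, rfl⟩
  · simp only [hb, and_false]

lemma filter_longRoots_snd_add_one_eq (hmax : ∀ x ∈ S, x ≤ n0) (hn0 : n0 ∈ S)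
    (hpred : ∀ x ∈ S, x < n0 → x ≤ nm) (hnm : nm = 0 ∨ nm ∈ S) (hlt : nm < n0)
    (hle : n0 ≤ ℓ - 3) :
    (longRoots ℓ S).filter (·.2 + 1 = n0)
      = (shortRoots ℓ S).filter (·.2 + 1 = n0) ∪ Icc (nm + 1) (n0 - 1) ×ˢ {n0 - 1} := by
  ext ⟨a, b⟩
  simp only [shortRoots, longRoots, mem_union, mem_filter, mem_product, mem_Icc, mem_singleton,
    Nat.even_iff]
  rcases eq_or_ne (b + 1) n0 with hb | hb
  · rw [hb, card_inter_Icc_eq_one hmax hn0 (by omega)]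
    by_cases ha : 1 ≤ a
    · have := card_inter_Icc_eq_zero_iff hpred hnm hlt ha hb
      omega
    · omega
  · omega

lemma card_filter_longRoots_snd_add_one (hmax : ∀ x ∈ S, x ≤ n0) (hn0 : n0 ∈ S)
    (hpred : ∀ x ∈ S, x < n0 → x ≤ nm) (hnm : nm = 0 ∨ nm ∈ S) (hlt : nm < n0)
    (hle : n0 ≤ ℓ - 3) :
    #((longRoots ℓ S).filter (·.2 + 1 = n0))
      = #((shortRoots ℓ S).filter (·.2 + 1 = n0)) + (n0 - 1 - nm) := by
  have hdisj : Disjoint ((shortRoots ℓ S).filter (·.2 + 1 = n0))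
      (Icc (nm + 1) (n0 - 1) ×ˢ {n0 - 1}) := by
    refine disjoint_left.mpr fun ⟨a, b⟩ hp hq => ?_
    simp only [mem_filter, mem_product, mem_Icc, mem_singleton] at hp hq
    have := (card_inter_Icc_eq_zero_iff hpred hnm hlt hp.1.1.1.1 hp.2).mpr (by omega)
    omega
  rw [filter_longRoots_snd_add_one_eq hmax hn0 hpred hnm hlt hle, card_union_of_disjoint hdisj,
    card_product, Nat.card_Icc, card_singleton]
  omega

theorem secondDiff_deltaD (hmax : ∀ x ∈ S, x ≤ n0) (hn0 : n0 ∈ S)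
    (hpred : ∀ x ∈ S, x < n0 → x ≤ nm) (hnm : nm = 0 ∨ nm ∈ S) (hlt : nm < n0)
    (hle : n0 ≤ ℓ - 3) : secondDiff (deltaD ℓ S) n0 = n0 - nm - 1 := by
  have hS1 : ℓ - 1 ∉ S := fun h => by have := hmax _ h; omega
  have hS2 : ℓ ∉ S := fun h => by have := hmax _ h; omega
  have htail : ∀ a ∈ tailRoots ℓ S, a < n0 := fun a ha => lt_of_mem_tailRoots hmax ha
  have hn : n0 + 1 ≤ ℓ - 2 := by omega
  unfold deltaD
  simp only [secondDiff_add]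
  simp only [secondDiff_sum, hS1, hS2, if_false, add_zero, lt_self_iff_false, false_and,
    and_false, secondDiff_const]
  rw [sum_secondDiff_indicator_Icc _ _ fun p hp => fst_lt_of_mem_shortRoots hmax hp,
    sum_secondDiff_indicator_Icc_add_eq_zero _ _ _ _ htail hn ?_,
    sum_secondDiff_indicator_Icc_add_eq_zero _ _ _ _ htail hn ?_,
    sum_secondDiff_indicator_Icc_add_eq_zero _ _ _ _ htail hn ?_,
    sum_secondDiff_indicator_Icc_add_two_indicator _ _ _ _
      (fun p hp => fst_lt_of_mem_longRoots hmax hp) hn ?_,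
    filter_shortRoots_snd_eq hmax hle,
    card_filter_longRoots_snd_add_one hmax hn0 hpred hnm hlt hle]
  · omega
  all_goals intro k hk; split_ifs <;> omega

end

theorem stmt13_general (ℓ m : ℕ) (hm : 1 ≤ m)
    (i : ℕ → ℕ) (h0 : i 0 = 0)
    (hmono : ∀ k ≤ m, i k < i (k + 1)) (him : i m ≤ ℓ - 3) :
    -(deltaD ℓ ((Finset.Icc 1 m).image i) (i m - 1))
      + 2 * deltaD ℓ ((Finset.Icc 1 m).image i) (i m)
      - deltaD ℓ ((Finset.Icc 1 m).image i) (i m + 1)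
      = (i m : ℤ) - (i (m - 1) : ℤ) - 1 := by
  have hi : StrictMonoOn i (Set.Iic m) :=
    strictMonoOn_Iic_of_lt_succ fun k hk => hmono k hk.le
  have hmem {k : ℕ} (hk : k ≤ m) : k ∈ Set.Iic m := hk
  refine secondDiff_deltaD ?_ (mem_image_of_mem i (mem_Icc.mpr ⟨hm, le_rfl⟩)) ?_ ?_
    (hi (hmem (Nat.sub_le m 1)) (hmem le_rfl) (by omega)) him
  · rintro _ hx
    obtain ⟨k, hk, rfl⟩ := mem_image.mp hx
    exact hi.monotoneOn (hmem (mem_Icc.mp hk).2) (hmem le_rfl) (mem_Icc.mp hk).2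
  · rintro _ hx hlt
    obtain ⟨k, hk, rfl⟩ := mem_image.mp hx
    have hkm : k < m := (hi.lt_iff_lt (hmem (mem_Icc.mp hk).2) (hmem le_rfl)).mp hlt
    exact hi.monotoneOn (hmem (mem_Icc.mp hk).2) (hmem (Nat.sub_le m 1)) (by omega)
  · rcases eq_or_lt_of_le hm with rfl | hm
    · exact Or.inl h0
    · exact Or.inr (mem_image_of_mem i (mem_Icc.mpr ⟨by omega, Nat.sub_le m 1⟩))

/-- type `D_ℓ`, case `j = m`, `i_m ≤ ℓ−3`:
`−δᶜ_{i_m−1} + 2δᶜ_{i_m} − δᶜ_{i_m+1} = i_m − i_{m−1} − 1`. -/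
theorem stmt13 (ℓ m : ℕ) (hℓ : 4 ≤ ℓ) (hm : 1 ≤ m)
    (i : ℕ → ℕ) (h0 : i 0 = 0)
    (hmono : ∀ k ≤ m, i k < i (k + 1)) (him : i m ≤ ℓ - 3) :
    -(deltaD ℓ ((Finset.Icc 1 m).image i) (i m - 1))
      + 2 * deltaD ℓ ((Finset.Icc 1 m).image i) (i m)
      - deltaD ℓ ((Finset.Icc 1 m).image i) (i m + 1)
      = (i m : ℤ) - (i (m - 1) : ℤ) - 1 :=
  stmt13_general ℓ m hm i h0 hmono him
end
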